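/- arXiv:0907.2766 — 3 statements merged into one kernel-verified Lean document; each statement's English description precedes it below -/
import Mathlib

section
/- Let p be prime and G ≅ C_{p^η} a cyclic group of prime power order. A zero-sum multiset [c_1,...,c_k] over G such that no proper nonempty submultiset sums to zero has length at most p^η. -/
/-!
Among the `|G| + 1` prefix sums `c₁ + ⋯ + cᵢ` (`0 ≤ i ≤ |G|`) of a sequence of length at
least `|G|`, two coincide by pigeonhole, so some nonempty block of at most `|G|` consecutive
terms sums to zero. Hence a multiset longer than `|G|` has a zero-sum proper nonempty submultiset.
-/

namespace List

theorem exists_sublist_sum_eq_zero_of_card_le {G : Type*} [AddGroup G] [Fintype G] (L : List G)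
    (hL : Fintype.card G ≤ L.length) :
    ∃ T : List G, T.Sublist L ∧ T ≠ [] ∧ T.length ≤ Fintype.card G ∧ T.sum = 0 := by
  obtain ⟨a, b, hab, hprefix⟩ := Fintype.exists_ne_map_eq_of_card_lt
    (fun i : Fin (Fintype.card G + 1) => (L.take i).sum) (by simp)
  wlog hlt : a < b generalizing a b
  · exact this b a hab.symm hprefix.symm (lt_of_le_of_ne (not_lt.mp hlt) hab.symm)
  have hb : (b : ℕ) ≤ Fintype.card G := Nat.le_of_lt_succ b.isLt
  have hlt' : (a : ℕ) < b := hlt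
  refine ⟨(L.drop a).take (b - a), (take_sublist _ _).trans (drop_sublist _ _), ?_, ?_, ?_⟩
  · rw [← length_pos_iff, length_take, length_drop]
    omega
  · exact (length_take_le _ _).trans (by omega)
  · have hsplit : L.take b = L.take a ++ (L.drop a).take (b - a) := by
      rw [← take_add, Nat.add_sub_cancel' hlt'.le]
    have : (L.take a).sum + ((L.drop a).take (b - a)).sum = (L.take a).sum + 0 := by
      rw [← sum_append, ← hsplit, add_zero]
      exact hprefix.symm
    exact add_left_cancel this

end List

namespace Multiset

theorem exists_le_sum_eq_zero_of_card_le {G : Type*} [AddCommGroup G] [Fintype G]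
    (S : Multiset G) (hS : Fintype.card G ≤ card S) :
    ∃ T ≤ S, T ≠ 0 ∧ card T ≤ Fintype.card G ∧ T.sum = 0 := by
  obtain ⟨L, rfl⟩ := S.exists_rep
  obtain ⟨T, hsub, hne, hlen, hsum⟩ :=
    L.exists_sublist_sum_eq_zero_of_card_le (by simpa using hS)
  exact ⟨T, hsub.subperm, by simpa using hne, by simpa using hlen, by simpa using hsum⟩

theorem card_le_card_of_forall_lt_sum_ne_zero {G : Type*} [AddCommGroup G] [Fintype G]
    (S : Multiset G) (hmin : ∀ T ≤ S, T ≠ 0 → T ≠ S → T.sum ≠ 0) :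
    card S ≤ Fintype.card G := by
  by_contra! hlt
  obtain ⟨T, hTS, hT0, hTcard, hTsum⟩ := S.exists_le_sum_eq_zero_of_card_le hlt.le
  exact hmin T hTS hT0 (fun h => by rw [h] at hTcard; omega) hTsum

end Multiset

theorem stmt_2_general (p : ℕ) (hp : p.Prime) (η : ℕ)
    (S : Multiset (ZMod (p ^ η)))
    (hmin : ∀ T : Multiset (ZMod (p ^ η)), T ≤ S → T ≠ 0 → T ≠ S → T.sum ≠ 0) :
    Multiset.card S ≤ p ^ η := by
  have : NeZero (p ^ η) := ⟨pow_ne_zero _ hp.ne_zero⟩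
  simpa [ZMod.card] using S.card_le_card_of_forall_lt_sum_ne_zero hmin

/-- A minimal zero-sum multiset over a cyclic group of prime-power order `p^η`
has length at most `p^η` (Davenport constant bound for cyclic `p`-groups). -/
theorem stmt_2 (p : ℕ) (hp : p.Prime) (η : ℕ)
    (S : Multiset (ZMod (p ^ η))) (hsum : S.sum = 0)
    (hmin : ∀ T : Multiset (ZMod (p ^ η)), T ≤ S → T ≠ 0 → T ≠ S → T.sum ≠ 0) :
    Multiset.card S ≤ p ^ η :=
  stmt_2_general p hp η S hmin
end

section
/- Let R be a commutative local PID with maximal ideal (π) and residue field of size q < ∞. For M, N ∈ GL_n(Frac R) ∩ M_n(R) with elementary divisor valuation tuples ê(M) and ê(N) (each weakly increasing in ℕ^n), the product MN has elementary divisor valuations ê(MN) satisfying ê_i(MN) ≥ ê_1(M) + ê_i(N) for all i, and Σ_i ê_i(MN) = Σ_i ê_i(M) + Σ_i ê_i(N). -/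
/-! The sum identity is multiplicativity of the determinant: a Smith normal form shows that
`det M` is associated to `π ^ Σ ê(M)`.

For the inequality, pull the scalar `π ^ ê₁(M)` out of the Smith form of `M`, which writes
`M N = A * diag (π ^ (ê₁(M) + ê(N))) * B`. It then suffices that
`A * diag (π ^ g) * B = diag (π ^ f)` with `f`, `g` increasing forces `g ≤ f`.
If `f i < g i = t`, keep the rows and columns `≤ i` and scale column `b` by
`π ^ (t - 1 - f b)`: the product becomes `π ^ (t - 1) • 1`. Modulo `π ^ t` only the entries
of `diag (π ^ g)` with index `< i` survive, so `π ^ (t - 1) • (1 - π • Y)` factors through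
fewer than `i + 1` coordinates and has determinant `0`, although `det (1 - π • Y)` is `1`
modulo `π`. -/

/-- `e` is the (weakly increasing) tuple of elementary divisor valuations of `M`:
there is a Smith normal form `U * M * V = diag(π^{e 0}, …, π^{e (n-1)})` with
`U, V ∈ GL_n(R)`. -/
def IsSNFVal {R : Type*} [CommRing R] (π : R) {n : ℕ}
    (M : Matrix (Fin n) (Fin n) R) (e : Fin n → ℕ) : Prop :=
  Monotone e ∧ ∃ U V : Matrix (Fin n) (Fin n) R, IsUnit U.det ∧ IsUnit V.det ∧
    U * M * V = Matrix.diagonal fun i => π ^ (e i)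

open Matrix

namespace Matrix

variable {R : Type*} [CommRing R] {m : Type*} [DecidableEq m]

theorem diagonal_pow_add (π : R) (c : ℕ) (e : m → ℕ) :
    diagonal (fun k => π ^ (c + e k)) = π ^ c • diagonal fun k => π ^ e k := by
  simp only [pow_add, ← diagonal_smul]
  rfl

variable [Fintype m]

theorem det_one_sub_smul_ne_zero {π : R} (hπ : ¬IsUnit π) (Y : Matrix m m R) :
    (1 - π • Y).det ≠ 0 := by
  intro h
  have hmap : (1 - π • Y).map (Ideal.Quotient.mk (Ideal.span {π})) = 1 := by
    ext a b
    simp [one_apply, Ideal.Quotient.eq_zero_iff_mem.mpr (Ideal.mem_span_singleton_self π)]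
  have hdet := congrArg det hmap
  rw [← RingHom.mapMatrix_apply, ← RingHom.map_det, h, map_zero, det_one] at hdet
  exact hπ (Ideal.span_singleton_eq_top.mp (Ideal.Quotient.zero_eq_one_iff.mp hdet))

theorem det_mul_eq_zero_of_card_lt [IsDomain R] {k : Type*} [Fintype k]
    (P : Matrix m k R) (Q : Matrix k m R) (h : Fintype.card k < Fintype.card m) :
    (P * Q).det = 0 := by
  by_contra hdet
  have hrank : (P * Q).rank ≤ Fintype.card k := (P.rank_mul_le_left Q).trans P.rank_le_card_width
  rw [rank_of_det_ne_zero hdet] at hrank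
  omega

theorem det_mul_eq_zero_of_forall_notMem_eq_zero [IsDomain R] {n : Type*} [Fintype n]
    (P : Matrix m n R) (Q : Matrix n m R) (s : Finset n) (hs : s.card < Fintype.card m)
    (hP : ∀ a, ∀ k ∉ s, P a k = 0) : (P * Q).det = 0 := by
  have hPQ : P * Q =
      (P.submatrix id ((↑) : s → n) : Matrix m s R) * (Q.submatrix (↑) id : Matrix s m R) := by
    ext a b
    simp only [mul_apply, submatrix_apply, id_eq]
    rw [Finset.sum_coe_sort s (fun k => P a k * Q k b)]
    exact (Finset.sum_subset s.subset_univ fun k _ hk => by simp [hP a k hk]).symm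
  rw [hPQ]
  exact det_mul_eq_zero_of_card_lt _ _ (by simpa using hs)

theorem le_of_mul_diagonal_pow_mul_eq [IsDomain R] {ι : Type*} [Fintype ι] [LinearOrder ι]
    {π : R} (hπ0 : π ≠ 0) (hπ : ¬IsUnit π) {f g : ι → ℕ} (hf : Monotone f) (hg : Monotone g)
    {A B : Matrix ι ι R} (h : A * diagonal (fun k => π ^ g k) * B = diagonal fun k => π ^ f k)
    (i : ι) : g i ≤ f i := by
  by_contra! hlt
  set t := g i
  let I := {a : ι // a ≤ i}
  let e : I → ι := Subtype.val
  let A' : Matrix I ι R := A.submatrix e id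
  let B' : Matrix ι I R := B.submatrix id e * diagonal fun b : I => π ^ (t - 1 - f b)
  let Dlow : Matrix ι ι R := diagonal fun k => if k < i then π ^ g k else 0
  let Dhigh : Matrix ι ι R := diagonal fun k => if k < i then 0 else π ^ (g k - t)
  have hsplit : diagonal (fun k => π ^ g k) = Dlow + π ^ t • Dhigh := by
    rw [← diagonal_smul, diagonal_add]
    congr 1
    funext k
    by_cases hk : k < i
    · simp [hk]
    · simp only [Pi.smul_apply, hk, if_false, smul_eq_mul, zero_add, ← pow_add]
      rw [Nat.add_sub_cancel' (hg (not_lt.mp hk))]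
  have hblock : A' * diagonal (fun k => π ^ g k) * B' = π ^ (t - 1) • 1 := by
    have hsub : A' * diagonal (fun k => π ^ g k) * B.submatrix id e =
        (diagonal fun k => π ^ f k).submatrix e e := by
      rw [← h, submatrix_mul _ _ _ id _ Function.bijective_id,
        submatrix_mul _ _ _ id _ Function.bijective_id]
      rfl
    rw [show B' = B.submatrix id e * diagonal (fun b : I => π ^ (t - 1 - f b)) from rfl,
      ← Matrix.mul_assoc, hsub, submatrix_diagonal _ _ Subtype.val_injective,
      diagonal_mul_diagonal, smul_one_eq_diagonal]
    congr 1
    funext b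
    rw [Function.comp_apply, ← pow_add]
    have : f b ≤ f i := hf b.2
    congr 1
    omega
  have hlow : A' * Dlow * B' = π ^ (t - 1) • (1 - π • (A' * Dhigh * B')) := by
    rw [hsplit, Matrix.mul_add, Matrix.add_mul, Matrix.mul_smul, Matrix.smul_mul] at hblock
    rw [smul_sub, smul_smul, ← pow_succ, Nat.sub_add_cancel (by omega), ← hblock,
      add_sub_cancel_right]
  have hcard : (Finset.univ.filter (· < i)).card < Fintype.card I := by
    rw [Fintype.card_subtype]
    refine Finset.card_lt_card ((Finset.ssubset_iff_of_subset ?_).mpr ⟨i, by simp⟩)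
    intro k hk
    simp only [Finset.mem_filter, Finset.mem_univ, true_and] at hk ⊢
    exact hk.le
  have hdet := det_mul_eq_zero_of_forall_notMem_eq_zero (A' * Dlow) B' _ hcard
    (fun a k hk => by simp_all [Dlow])
  rw [hlow, det_smul] at hdet
  exact mul_ne_zero (pow_ne_zero _ (pow_ne_zero _ hπ0)) (det_one_sub_smul_ne_zero hπ _) hdet

end Matrix

theorem associated_pow_pow_iff {M₀ : Type*} [CommMonoidWithZero M₀] [IsCancelMulZero M₀] {a : M₀}
    (ha₀ : a ≠ 0) (ha : ¬IsUnit a) {m n : ℕ} : Associated (a ^ m) (a ^ n) ↔ m = n :=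
  ⟨fun h => le_antisymm ((pow_dvd_pow_iff ha₀ ha).mp h.dvd) ((pow_dvd_pow_iff ha₀ ha).mp h.dvd'),
    fun h => h ▸ Associated.refl _⟩

namespace IsSNFVal

variable {R : Type*} [CommRing R] {π : R} {n : ℕ} {M N : Matrix (Fin n) (Fin n) R}
  {eM eN eP : Fin n → ℕ}

theorem exists_eq_mul_diagonal_mul (h : IsSNFVal π M eM) :
    ∃ A B : Matrix (Fin n) (Fin n) R, M = A * diagonal (fun i => π ^ eM i) * B := by
  obtain ⟨-, U, V, hU, hV, hUMV⟩ := h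
  refine ⟨U⁻¹, V⁻¹, ?_⟩
  rw [← hUMV, Matrix.mul_assoc U, nonsing_inv_mul_cancel_left U (M * V) hU,
    mul_nonsing_inv_cancel_right V M hV]

theorem associated_det (h : IsSNFVal π M eM) : Associated M.det (π ^ ∑ i, eM i) := by
  obtain ⟨-, U, V, hU, hV, hUMV⟩ := h
  refine ⟨hU.unit * hV.unit, ?_⟩
  have hdet := congrArg det hUMV
  rw [det_mul, det_mul, det_diagonal, Finset.prod_pow_eq_pow_sum] at hdet
  rw [← hdet, Units.val_mul, IsUnit.unit_spec, IsUnit.unit_spec]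
  ring

theorem sum_eq_add_of_mul [IsDomain R] (hπ : Irreducible π) (hM : IsSNFVal π M eM)
    (hN : IsSNFVal π N eN) (hMN : IsSNFVal π (M * N) eP) :
    ∑ i, eP i = ∑ i, eM i + ∑ i, eN i := by
  rw [← associated_pow_pow_iff hπ.ne_zero hπ.not_isUnit, pow_add]
  refine hMN.associated_det.symm.trans ?_
  rw [det_mul]
  exact hM.associated_det.mul_mul hN.associated_det

theorem add_le_of_mul [IsDomain R] (hπ : Irreducible π) (hM : IsSNFVal π M eM)
    (hN : IsSNFVal π N eN) (hMN : IsSNFVal π (M * N) eP) {c : ℕ} (hc : ∀ k, c ≤ eM k)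
    (i : Fin n) : c + eN i ≤ eP i := by
  obtain ⟨AM, BM, rfl⟩ := hM.exists_eq_mul_diagonal_mul
  obtain ⟨AN, BN, rfl⟩ := hN.exists_eq_mul_diagonal_mul
  obtain ⟨hmono, U, V, -, -, hUV⟩ := hMN
  have hshift : diagonal (fun k => π ^ eM k) = π ^ c • diagonal fun k => π ^ (eM k - c) := by
    rw [← diagonal_pow_add]
    congr 2 with k
    rw [Nat.add_sub_cancel' (hc k)]
  refine le_of_mul_diagonal_pow_mul_eq hπ.ne_zero hπ.not_isUnit hmono
    (fun a b hab => Nat.add_le_add_left (hN.1 hab) c)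
    (A := U * AM * diagonal (fun k => π ^ (eM k - c)) * BM * AN) (B := BN * V) ?_ i
  rw [← hUV, diagonal_pow_add, hshift]
  simp only [Matrix.mul_smul, Matrix.smul_mul, Matrix.mul_assoc]

end IsSNFVal

theorem stmt_6_general (R : Type*) [CommRing R] [IsDomain R]
    (π : R) (hπ : Irreducible π)
    (n : ℕ) (hn : 0 < n) (M N : Matrix (Fin n) (Fin n) R)
    (eM eN eP : Fin n → ℕ)
    (hMe : IsSNFVal π M eM) (hNe : IsSNFVal π N eN) (hPe : IsSNFVal π (M * N) eP) :
    (∀ i : Fin n, eM ⟨0, hn⟩ + eN i ≤ eP i) ∧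
    (∑ i, eP i = ∑ i, eM i + ∑ i, eN i) :=
  ⟨hMe.add_le_of_mul hπ hNe hPe fun k => hMe.1 (Nat.zero_le k),
    hMe.sum_eq_add_of_mul hπ hNe hPe⟩

/-- Over a local PID (DVR) `R` with maximal ideal `(π)` and finite residue field
of size `q`, for integral matrices `M`, `N` invertible over `Frac R`, the
elementary divisor valuations of the product satisfy
`ê₁(M) + êᵢ(N) ≤ êᵢ(MN)` and `Σ êᵢ(MN) = Σ êᵢ(M) + Σ êᵢ(N)`. -/
theorem stmt_6 (R : Type*) [CommRing R] [IsDomain R] [IsDiscreteValuationRing R]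
    (π : R) (hπ : Irreducible π) (q : ℕ)
    (hq : Nat.card (IsLocalRing.ResidueField R) = q) (hqfin : 0 < q)
    (n : ℕ) (hn : 0 < n) (M N : Matrix (Fin n) (Fin n) R)
    (hM : M.det ≠ 0) (hN : N.det ≠ 0)
    (eM eN eP : Fin n → ℕ)
    (hMe : IsSNFVal π M eM) (hNe : IsSNFVal π N eN) (hPe : IsSNFVal π (M * N) eP) :
    (∀ i : Fin n, eM ⟨0, hn⟩ + eN i ≤ eP i) ∧
    (∑ i, eP i = ∑ i, eM i + ∑ i, eN i) :=
  stmt_6_general R π hπ n hn M N eM eN eP hMe hNe hPe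
end

section
/- For a 2n×2n matrix M over a discrete valuation ring R satisfying MᵗJM = π^l·u·J with u a unit and J the standard symplectic matrix, the elementary divisor valuations satisfy ê_i(M) + ê_{2n+1-i}(M) = l for all 1 ≤ i ≤ 2n. -/
/-! The relation `Mᵀ J M = π^l u J` says that `N = J⁻¹ Mᵀ J` satisfies `N M = π^l u`.
Moving this through a Smith form `U M V = diag(π^{e_i})` forces
`V⁻¹ N U⁻¹ = u · diag(π^{l - e_i})`, so `Mᵀ`, and hence `M`, is equivalent to
`diag(π^{l - e_i})`. The ideal generated by the `k × k` minors is invariant under multiplication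
by invertible matrices, and for a diagonal `diag(π^{a_i})` with `a` monotone it is
`(π^{a_1 + ⋯ + a_k})`. Comparing the two diagonal forms gives `e_i = l - e_{2n+1-i}`. -/

open Matrix

lemma Fin.val_le_val_of_strictMono {k N : ℕ} {g : Fin k → Fin N} (hg : StrictMono g)
    (i : Fin k) : (i : ℕ) ≤ g i := by
  obtain ⟨i, hi⟩ := i
  induction i with
  | zero => exact Nat.zero_le _
  | succ j ih =>
    have hlt : g ⟨j, by omega⟩ < g ⟨j + 1, hi⟩ := hg (Fin.mk_lt_mk.mpr j.lt_succ_self)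
    have hj : j ≤ g ⟨j, by omega⟩ := ih (by omega)
    rw [Fin.lt_def] at hlt
    change j + 1 ≤ _
    omega

lemma Fin.sum_castLE_le_sum_of_injective {M : Type*} [AddCommMonoid M] [PartialOrder M]
    [IsOrderedAddMonoid M] {N k : ℕ} {a : Fin N → M} (ha : Monotone a) (hk : k ≤ N)
    {f : Fin k → Fin N} (hf : Function.Injective f) :
    ∑ i, a (Fin.castLE hk i) ≤ ∑ i, a (f i) := by
  classical
  set S := Finset.univ.image f
  have hcard : S.card = k := by simp [S, Finset.card_image_of_injective _ hf]
  have hsorted : ∑ i, a (f i) = ∑ i, a (S.orderEmbOfFin hcard i) := calc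
    ∑ i, a (f i) = ∑ x : S, a x := by
      rw [Finset.sum_coe_sort, Finset.sum_image fun x _ y _ h => hf h]
    _ = ∑ i, a (S.orderIsoOfFin hcard i) := ((S.orderIsoOfFin hcard).toEquiv.sum_comp _).symm
  rw [hsorted]
  exact Finset.sum_le_sum fun i _ =>
    ha (Fin.val_le_val_of_strictMono (S.orderEmbOfFin hcard).strictMono i)

lemma Fin.eq_of_forall_sum_castLE_eq {M : Type*} [AddCancelCommMonoid M] {N : ℕ}
    {a b : Fin N → M} (h : ∀ k (hk : k ≤ N), ∑ i, a (Fin.castLE hk i) = ∑ i, b (Fin.castLE hk i)) :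
    a = b := by
  funext i
  have hsucc := h (i + 1) i.isLt
  rw [Fin.sum_univ_castSucc, Fin.sum_univ_castSucc] at hsucc
  have hlast : Fin.castLE i.isLt (Fin.last i) = i := rfl
  simpa [Fin.castLE_castSucc, h i i.isLt.le, hlast] using hsucc

lemma Ideal.span_singleton_pow_inj {R : Type*} [CommRing R] [IsDomain R] {π : R} (h0 : π ≠ 0)
    (hu : ¬IsUnit π) {a b : ℕ} : Ideal.span {π ^ a} = Ideal.span {π ^ b} ↔ a = b := by
  refine ⟨fun h => ?_, fun h => h ▸ rfl⟩
  rw [Ideal.span_singleton_eq_span_singleton] at h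
  exact le_antisymm ((pow_dvd_pow_iff h0 hu).mp h.dvd) ((pow_dvd_pow_iff h0 hu).mp h.symm.dvd)

namespace Matrix

variable {R : Type*} [CommRing R]

def minorsIdeal {m n : Type*} (k : ℕ) (M : Matrix m n R) : Ideal R :=
  Ideal.span {x | ∃ (f : Fin k → m) (g : Fin k → n), (M.submatrix f g).det = x}

section minorsIdeal

variable {l m n o : Type*} (k : ℕ)

lemma det_submatrix_mem_minorsIdeal (M : Matrix m n R) (f : Fin k → m) (g : Fin k → n) :
    (M.submatrix f g).det ∈ minorsIdeal k M :=
  Ideal.subset_span ⟨f, g, rfl⟩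

variable {k} in
lemma minorsIdeal_le_iff {M : Matrix m n R} {I : Ideal R} :
    minorsIdeal k M ≤ I ↔
      ∀ (f : Fin k → m) (g : Fin k → n), (M.submatrix f g).det ∈ I := by
  rw [minorsIdeal, Ideal.span_le]
  exact ⟨fun h f g => h ⟨f, g, rfl⟩, fun h _ ⟨f, g, hx⟩ => hx ▸ h f g⟩

lemma minorsIdeal_transpose_le (M : Matrix m n R) : minorsIdeal k Mᵀ ≤ minorsIdeal k M :=
  minorsIdeal_le_iff.mpr fun f g => by
    rw [← transpose_submatrix, det_transpose]
    exact det_submatrix_mem_minorsIdeal k M g f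

lemma minorsIdeal_transpose (M : Matrix m n R) : minorsIdeal k Mᵀ = minorsIdeal k M :=
  le_antisymm (minorsIdeal_transpose_le k M) (by simpa using minorsIdeal_transpose_le k Mᵀ)

lemma minorsIdeal_mul_le_right [Fintype m] (A : Matrix l m R) (B : Matrix m n R) :
    minorsIdeal k (A * B) ≤ minorsIdeal k B := by
  refine minorsIdeal_le_iff.mpr fun f g => ?_
  -- each row of a minor of `A * B` is a combination of rows of `B`: expand by multilinearity
  have hrows : (A * B).submatrix f g = fun i => ∑ t, A (f i) t • B.submatrix id g t := by
    ext i j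
    simp [mul_apply, Finset.sum_apply]
  change detRowAlternating _ ∈ _
  rw [hrows, ← AlternatingMap.coe_multilinearMap, MultilinearMap.map_sum]
  refine Ideal.sum_mem _ fun r _ => ?_
  rw [MultilinearMap.map_smul_univ, smul_eq_mul]
  exact Ideal.mul_mem_left _ _ (det_submatrix_mem_minorsIdeal k B r g)

lemma minorsIdeal_mul_le_left [Fintype m] (A : Matrix l m R) (B : Matrix m n R) :
    minorsIdeal k (A * B) ≤ minorsIdeal k A := by
  rw [← minorsIdeal_transpose k (A * B), transpose_mul, ← minorsIdeal_transpose k A]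
  exact minorsIdeal_mul_le_right k _ _

lemma minorsIdeal_mul_mul_of_isUnit_det [Fintype m] [DecidableEq m] [Fintype n] [DecidableEq n]
    {A : Matrix m m R} {B : Matrix n n R} (hA : IsUnit A.det) (hB : IsUnit B.det)
    (M : Matrix m n R) : minorsIdeal k (A * M * B) = minorsIdeal k M := by
  have key (A : Matrix m m R) (M : Matrix m n R) (B : Matrix n n R) :
      minorsIdeal k (A * M * B) ≤ minorsIdeal k M :=
    (minorsIdeal_mul_le_left k _ _).trans (minorsIdeal_mul_le_right k _ _)
  refine le_antisymm (key A M B) ?_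
  calc minorsIdeal k M = minorsIdeal k (A⁻¹ * (A * M * B) * B⁻¹) := by
        rw [Matrix.mul_assoc A, nonsing_inv_mul_cancel_left A (M * B) hA,
          mul_nonsing_inv_cancel_right B M hB]
    _ ≤ _ := key _ _ _

lemma minorsIdeal_submatrix_le (M : Matrix m n R) (σ : l → m) (τ : o → n) :
    minorsIdeal k (M.submatrix σ τ) ≤ minorsIdeal k M :=
  minorsIdeal_le_iff.mpr fun f g => by
    rw [submatrix_submatrix]
    exact det_submatrix_mem_minorsIdeal k M _ _

lemma minorsIdeal_submatrix_equiv (M : Matrix m n R) (σ : l ≃ m) (τ : o ≃ n) :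
    minorsIdeal k (M.submatrix σ τ) = minorsIdeal k M := by
  refine le_antisymm (minorsIdeal_submatrix_le k M σ τ) ?_
  simpa using minorsIdeal_submatrix_le k (M.submatrix σ τ) σ.symm τ.symm

lemma minorsIdeal_smul_le (c : R) (M : Matrix m n R) :
    minorsIdeal k (c • M) ≤ minorsIdeal k M :=
  minorsIdeal_le_iff.mpr fun f g => by
    change (c • M.submatrix f g).det ∈ _
    rw [det_smul]
    exact Ideal.mul_mem_left _ _ (det_submatrix_mem_minorsIdeal k M f g)

lemma minorsIdeal_units_smul (u : Rˣ) (M : Matrix m n R) :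
    minorsIdeal k ((u : R) • M) = minorsIdeal k M := by
  refine le_antisymm (minorsIdeal_smul_le k _ M) ?_
  simpa [smul_smul] using minorsIdeal_smul_le k ((u⁻¹ : Rˣ) : R) ((u : R) • M)

lemma det_submatrix_diagonal [DecidableEq m] (d : m → R) (f g : Fin k → m) :
    ((diagonal d).submatrix f g).det =
      (∏ i, d (f i)) * ((1 : Matrix m m R).submatrix f g).det := by
  rw [← det_diagonal, ← det_mul]
  congr 1
  ext i j
  simp [diagonal_apply, one_apply]

lemma minorsIdeal_diagonal_pow {N : ℕ} (π : R) {a : Fin N → ℕ} (ha : Monotone a)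
    (hk : k ≤ N) :
    minorsIdeal k (diagonal fun i => π ^ a i) = Ideal.span {π ^ ∑ i, a (Fin.castLE hk i)} := by
  refine le_antisymm (minorsIdeal_le_iff.mpr fun f g => ?_) ?_
  · rw [Ideal.mem_span_singleton, det_submatrix_diagonal, Finset.prod_pow_eq_pow_sum]
    by_cases hf : Function.Injective f
    · exact (pow_dvd_pow π (Fin.sum_castLE_le_sum_of_injective ha hk hf)).mul_right _
    · obtain ⟨i, j, hij, hne⟩ := Function.not_injective_iff.mp hf
      rw [det_zero_of_row_eq hne (by ext; rw [submatrix_apply, submatrix_apply, hij]), mul_zero]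
      exact dvd_zero _
  · rw [Ideal.span_singleton_le_iff_mem]
    have h := det_submatrix_mem_minorsIdeal k (diagonal fun i => π ^ a i)
      (Fin.castLE hk) (Fin.castLE hk)
    rwa [det_submatrix_diagonal, submatrix_one _ (Fin.castLE_injective hk), det_one, mul_one,
      Finset.prod_pow_eq_pow_sum] at h

end minorsIdeal

section square

variable {n : Type*} [Fintype n] [DecidableEq n]

lemma exists_transpose_eq_mul_mul_and_mul_eq_smul_one {J M U V : Matrix n n R} {c : R}
    (hJ : IsUnit J.det) (hU : IsUnit U.det) (hV : IsUnit V.det) (h : Mᵀ * J * M = c • J) :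
    ∃ A P B : Matrix n n R, IsUnit A.det ∧ IsUnit B.det ∧ Mᵀ = A * P * B ∧
      P * (U * M * V) = c • 1 := by
  refine ⟨J * V, V⁻¹ * J⁻¹ * Mᵀ * J * U⁻¹, U * J⁻¹, by simp [hJ, hV], by simp [hJ, hU], ?_, ?_⟩
  · simp only [Matrix.mul_assoc, mul_nonsing_inv_cancel_left _ _ hV,
      nonsing_inv_mul_cancel_left _ _ hU, mul_nonsing_inv_cancel_left _ _ hJ, mul_nonsing_inv _ hJ,
      Matrix.mul_one]
  · calc V⁻¹ * J⁻¹ * Mᵀ * J * U⁻¹ * (U * M * V)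
        = V⁻¹ * (J⁻¹ * (Mᵀ * J * M)) * V := by
          simp only [Matrix.mul_assoc, nonsing_inv_mul_cancel_left _ _ hU]
      _ = c • 1 := by
          rw [h, Matrix.mul_smul, nonsing_inv_mul _ hJ, Matrix.mul_smul, Matrix.smul_mul,
            Matrix.mul_one, nonsing_inv_mul _ hV]

lemma eq_smul_diagonal_of_mul_diagonal_pow_eq [IsDomain R] {π : R} (h0 : π ≠ 0)
    (hu : ¬IsUnit π) {e : n → ℕ} {l : ℕ} {u : Rˣ} {P : Matrix n n R}
    (h : P * diagonal (fun i => π ^ e i) = (π ^ l * u) • 1) :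
    (∀ i, e i ≤ l) ∧ P = (u : R) • diagonal fun i => π ^ (l - e i) := by
  have hentry (i j : n) : P i j * π ^ e j = if i = j then π ^ l * u else 0 := by
    simpa [mul_diagonal, one_apply] using congrFun (congrFun h i) j
  have hle (i : n) : e i ≤ l := by
    have hdvd : π ^ e i ∣ π ^ l * u :=
      Dvd.intro_left (P i i) ((hentry i i).trans (if_pos rfl))
    exact (pow_dvd_pow_iff h0 hu).mp (Units.dvd_mul_right.mp hdvd)
  refine ⟨hle, ext fun i j => mul_right_cancel₀ (pow_ne_zero (e j) h0) ?_⟩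
  rw [hentry]
  split_ifs with hij
  · rw [hij, smul_apply, diagonal_apply_eq, smul_eq_mul, mul_assoc, pow_sub_mul_pow π (hle j),
      mul_comm]
  · simp [hij]

end square

end Matrix

lemma IsSNFVal.minorsIdeal_eq {R : Type*} [CommRing R] {π : R} {N : ℕ}
    {M : Matrix (Fin N) (Fin N) R} {e : Fin N → ℕ} (he : IsSNFVal π M e) {k : ℕ}
    (hk : k ≤ N) :
    minorsIdeal k M = Ideal.span {π ^ ∑ i, e (Fin.castLE hk i)} := by
  obtain ⟨hmono, U, V, hU, hV, hD⟩ := he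
  rw [← minorsIdeal_mul_mul_of_isUnit_det k hU hV, hD, minorsIdeal_diagonal_pow k π hmono hk]

theorem stmt_17_general (R : Type*) [CommRing R] [IsDomain R]
    (π : R) (hπ : Irreducible π) (n : ℕ) (l : ℕ) (u : Rˣ)
    (M : Matrix (Fin (n + n)) (Fin (n + n)) R)
    (hsymp : Mᵀ * ((Matrix.fromBlocks 0 1 (-1) 0).submatrix
        finSumFinEquiv.symm finSumFinEquiv.symm) * M =
      (π ^ l * (u : R)) • ((Matrix.fromBlocks 0 1 (-1) 0).submatrix
        finSumFinEquiv.symm finSumFinEquiv.symm))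
    (e : Fin (n + n) → ℕ) (he : IsSNFVal π M e) :
    ∀ i : Fin (n + n), e i + e i.rev = l := by
  have hJ : IsUnit ((Matrix.fromBlocks 0 1 (-1) 0).submatrix
      finSumFinEquiv.symm finSumFinEquiv.symm : Matrix (Fin (n + n)) (Fin (n + n)) R).det := by
    rw [det_submatrix_equiv_self, show fromBlocks 0 1 (-1) 0 = (J (Fin n) R)ᵀ by
      simp [J, fromBlocks_transpose], det_transpose]
    exact isUnit_det_J _ _
  obtain ⟨U, V, hU, hV, hD⟩ := he.2
  obtain ⟨A, P, B, hA, hB, hMt, hPD⟩ :=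
    exists_transpose_eq_mul_mul_and_mul_eq_smul_one hJ hU hV hsymp
  rw [hD] at hPD
  obtain ⟨hle, rfl⟩ := eq_smul_diagonal_of_mul_diagonal_pow_eq hπ.ne_zero hπ.not_isUnit hPD
  have hmono_rev : Monotone fun i : Fin (n + n) => l - e i.rev :=
    fun i j hij => Nat.sub_le_sub_left (he.1 (Fin.rev_le_rev.mpr hij)) l
  have hrev : (diagonal fun i => π ^ (l - e i.rev)) =
      (diagonal fun i => π ^ (l - e i)).submatrix Fin.revPerm Fin.revPerm :=
    (submatrix_diagonal_equiv (fun i => π ^ (l - e i)) Fin.revPerm).symm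
  have he_rev : e = fun i => l - e i.rev := Fin.eq_of_forall_sum_castLE_eq fun k hk => by
    rw [← Ideal.span_singleton_pow_inj hπ.ne_zero hπ.not_isUnit, ← he.minorsIdeal_eq hk,
      ← minorsIdeal_diagonal_pow k π hmono_rev hk, ← minorsIdeal_transpose, hMt,
      minorsIdeal_mul_mul_of_isUnit_det k hA hB, minorsIdeal_units_smul, hrev,
      minorsIdeal_submatrix_equiv]
  intro i
  have hi := congrFun he_rev i
  have hle_i := hle i.rev
  omega

/-- For a `2n × 2n` matrix `M` over a DVR satisfying `Mᵀ J M = π^l u J` with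
`u` a unit and `J` the standard symplectic matrix, the elementary divisor
valuations satisfy the symmetry `êᵢ(M) + ê_{2n+1-i}(M) = l` for all `i`. -/
theorem stmt_17 (R : Type*) [CommRing R] [IsDomain R] [IsDiscreteValuationRing R]
    (π : R) (hπ : Irreducible π) (n : ℕ) (l : ℕ) (u : Rˣ)
    (M : Matrix (Fin (n + n)) (Fin (n + n)) R)
    (hsymp : Mᵀ * ((Matrix.fromBlocks 0 1 (-1) 0).submatrix
        finSumFinEquiv.symm finSumFinEquiv.symm) * M =
      (π ^ l * (u : R)) • ((Matrix.fromBlocks 0 1 (-1) 0).submatrix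
        finSumFinEquiv.symm finSumFinEquiv.symm))
    (e : Fin (n + n) → ℕ) (he : IsSNFVal π M e) :
    ∀ i : Fin (n + n), e i + e i.rev = l :=
  stmt_17_general R π hπ n l u M hsymp e he
end
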